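/- Every Mathias generic real is canonically immune, with modulus of immunity the identity function i ↦ i. -/

import Mathlib

/-- The `e`-th computably enumerable set. -/
def WSet (e : ℕ) : Set ℕ := {n | ((Denumerable.ofNat Nat.Partrec.Code e).eval n).Dom}

/-- A canonical numbering: a computable surjection onto the finite subsets of `ℕ`. -/
def CanonicalNumbering (D : ℕ → Finset ℕ) : Prop := Computable D ∧ Function.Surjective D

/-- `R` is canonically immune with modulus of immunity `h`. -/
def CanonImmuneMod (R : Set ℕ) (h : ℕ → ℕ) : Prop :=
  R.Infinite ∧ ∀ D : ℕ → Finset ℕ, CanonicalNumbering D →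
    ∀ᶠ i in Filter.atTop, ↑(D i) ⊆ R → (D i).card ≤ h i

/-- `R` is canonically immune. -/
def CanonicallyImmune (R : Set ℕ) : Prop :=
  ∃ h : ℕ → ℕ, Computable h ∧ CanonImmuneMod R h

/-- `R` is Δ⁰₂ (limit computable). -/
def Delta02 (R : Set ℕ) : Prop :=
  ∃ f : ℕ → ℕ → Bool, Computable₂ f ∧
    ∀ n, ∀ᶠ s in Filter.atTop, (f s n = true ↔ n ∈ R)

/-- Partial functions recursive in an oracle `O : ℕ → ℕ`. -/
inductive RecursiveInOracleFn (O : ℕ → ℕ) : (ℕ →. ℕ) → Prop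
  | zero : RecursiveInOracleFn O fun _ => 0
  | succ : RecursiveInOracleFn O fun n => Part.some (n + 1)
  | left : RecursiveInOracleFn O fun n => Part.some (Nat.unpair n).1
  | right : RecursiveInOracleFn O fun n => Part.some (Nat.unpair n).2
  | oracle : RecursiveInOracleFn O fun n => Part.some (O n)
  | pair {f g} : RecursiveInOracleFn O f → RecursiveInOracleFn O g →
      RecursiveInOracleFn O fun n => Nat.pair <$> f n <*> g n
  | comp {f g} : RecursiveInOracleFn O f → RecursiveInOracleFn O g →
      RecursiveInOracleFn O fun n => g n >>= f
  | prec {f g} : RecursiveInOracleFn O f → RecursiveInOracleFn O g →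
      RecursiveInOracleFn O (Nat.unpaired fun a n =>
        n.rec (f a) fun y IH => do let i ← IH; g (Nat.pair a (Nat.pair y i)))
  | rfind {f} : RecursiveInOracleFn O f →
      RecursiveInOracleFn O fun a => Nat.rfind fun n => (fun m => m = 0) <$> f (Nat.pair a n)

open Classical in
/-- Characteristic function of a set of naturals. -/
noncomputable def chi (A : Set ℕ) : ℕ → ℕ := fun n => if n ∈ A then 1 else 0

/-- `A` is Turing reducible to the oracle `O`. -/
def TuringReducibleTo (A : Set ℕ) (O : ℕ → ℕ) : Prop :=
  RecursiveInOracleFn O fun n => Part.some (chi A n)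

/-- `A` is Turing reducible to the set `B`. -/
def TuringReducibleSets (A B : Set ℕ) : Prop := TuringReducibleTo A (chi B)

/-- The oracle given by a real `G ∈ 2^ω`. -/
def oracleOf (G : ℕ → Bool) : ℕ → ℕ := fun n => cond (G n) 1 0

/-- `S` is computably enumerable relative to the real `G`. -/
def CEIn (G : ℕ → Bool) (S : Set ℕ) : Prop :=
  ∃ f : ℕ →. ℕ, RecursiveInOracleFn (oracleOf G) f ∧ S = {n | (f n).Dom}

/-- The length-`n` initial segment of a real. -/
def initSeg (G : ℕ → Bool) (n : ℕ) : List Bool := List.ofFn fun i : Fin n => G i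

/-- A Σ⁰₂ set of binary strings. -/
def Sigma02Strings (X : Set (List Bool)) : Prop :=
  ∃ p : List Bool → ℕ → ℕ → Bool,
    (Computable fun x : List Bool × ℕ × ℕ => p x.1 x.2.1 x.2.2) ∧
    X = {σ | ∃ m, ∀ k, p σ m k = true}

/-- A (Cohen) 2-generic real. -/
def TwoGeneric (G : ℕ → Bool) : Prop :=
  ∀ X : Set (List Bool), Sigma02Strings X →
    (∃ n, initSeg G n ∈ X) ∨ (∃ n, ∀ τ, initSeg G n <+: τ → τ ∉ X)

/-- A computably enumerable set of binary strings. -/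
def CEStrings (X : Set (List Bool)) : Prop :=
  ∃ p : List Bool → ℕ → Bool, Computable₂ p ∧ X = {σ | ∃ s, p σ s = true}

/-- A dense set of binary strings. -/
def DenseStrings (X : Set (List Bool)) : Prop := ∀ σ, ∃ τ, σ <+: τ ∧ τ ∈ X

/-- A weakly 1-generic real. -/
def Weakly1Generic (G : ℕ → Bool) : Prop :=
  ∀ X : Set (List Bool), CEStrings X → DenseStrings X → ∃ n, initSeg G n ∈ X

/-- A hyperimmune set: infinite and its increasing enumeration (principal function)
is not dominated by any computable function. -/
def Hyperimmune (R : Set ℕ) : Prop :=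
  R.Infinite ∧ ∀ f : ℕ → ℕ, Computable f →
    ∃ᶠ n in Filter.atTop, f n < Nat.nth (· ∈ R) n

/-- A (computable) Mathias condition `[a, A]`. -/
structure MathiasCond where
  a : Finset ℕ
  A : Set ℕ
  infinite : A.Infinite
  comp : ComputablePred (· ∈ A)
  lt : ∀ x ∈ a, ∀ y ∈ A, x < y

/-- `c'` extends `c` as a Mathias condition. -/
def MathiasCond.Extends (c' c : MathiasCond) : Prop :=
  c.a ⊆ c'.a ∧ (↑c'.a \ ↑c.a : Set ℕ) ⊆ c.A ∧ c'.A ⊆ c.A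

/-- A dense family of Mathias conditions. -/
def MathiasDense (𝒳 : Set MathiasCond) : Prop := ∀ c, ∃ c' ∈ 𝒳, c'.Extends c

/-- `R ∈ [a, A]`. -/
def MathiasCond.Mem (c : MathiasCond) (R : Set ℕ) : Prop :=
  ↑c.a ⊆ R ∧ R ⊆ ↑c.a ∪ c.A

/-- `R` meets the family `𝒳` of Mathias conditions. -/
def Meets (R : Set ℕ) (𝒳 : Set MathiasCond) : Prop := ∃ c ∈ 𝒳, c.Mem R

/-- The arithmetical sets of naturals: closure of the computable sets under
complementation and projection. -/
inductive Arithmetical : Set ℕ → Prop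
  | of_computable {S : Set ℕ} : ComputablePred (· ∈ S) → Arithmetical S
  | compl {S : Set ℕ} : Arithmetical S → Arithmetical {n | n ∉ S}
  | proj {S : Set ℕ} : Arithmetical S → Arithmetical {n | ∃ m, Nat.pair n m ∈ S}

open Classical in
/-- `n` codes the Mathias condition `c`: its first component is the canonical code of the
finite set and its second component is an index for the characteristic function of `A`. -/
noncomputable def CondCode (n : ℕ) (c : MathiasCond) : Prop :=
  n.unpair.1 = Encodable.encode c.a ∧
  ∀ x, ((Denumerable.ofNat Nat.Partrec.Code n.unpair.2)).eval x = Part.some (if x ∈ c.A then 1 else 0)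

/-- The set of codes of members of `𝒳`. -/
def CodesOf (𝒳 : Set MathiasCond) : Set ℕ := {n | ∃ c ∈ 𝒳, CondCode n c}

/-- A Mathias generic real: one meeting every arithmetically definable dense family
of Mathias conditions. -/
def MathiasGeneric (R : Set ℕ) : Prop :=
  ∀ 𝒳 : Set MathiasCond, Arithmetical (CodesOf 𝒳) → MathiasDense 𝒳 → Meets R 𝒳

/-- A Σ⁰₃ set of naturals. -/
def Sigma03Set (S : Set ℕ) : Prop :=
  ∃ p : ℕ → ℕ → ℕ → ℕ → Bool,
    (Computable fun x : ℕ × ℕ × ℕ × ℕ => p x.1 x.2.1 x.2.2.1 x.2.2.2) ∧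
    S = {n | ∃ a, ∀ b, ∃ c, p n a b c = true}

/-- A Mathias 3-generic real. -/
def Mathias3Generic (R : Set ℕ) : Prop :=
  ∀ 𝒳 : Set MathiasCond, Sigma03Set (CodesOf 𝒳) → MathiasDense 𝒳 → Meets R 𝒳

/-- An effectively immune set. -/
def EffectivelyImmune (Q : Set ℕ) : Prop :=
  Q.Infinite ∧ ∃ h : ℕ → ℕ, Computable h ∧
    ∀ e, WSet e ⊆ Q → (WSet e).Finite ∧ (WSet e).ncard ≤ h e

/-- The basic cylinder of 2^ω determined by the finite string `σ`. -/
def Cyl (σ : List Bool) : Set (ℕ → Bool) := {G | ∀ i : Fin σ.length, G i = σ.get i}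

/-- The open subset of 2^ω generated by a set of strings. -/
def OpenFrom (P : Set (List Bool)) : Set (ℕ → Bool) := ⋃ σ ∈ P, Cyl σ

/-- A uniformly c.e. sequence of sets of strings. -/
def UniformlyCE (P : ℕ → Set (List Bool)) : Prop :=
  ∃ f : ℕ → List Bool → ℕ → Bool,
    (Computable fun x : ℕ × List Bool × ℕ => f x.1 x.2.1 x.2.2) ∧
    ∀ n σ, σ ∈ P n ↔ ∃ s, f n σ s = true

/-- `μ` is the uniform (fair-coin) product measure on 2^ω: every basic cylinder
determined by a string of length `l` has measure `2⁻ˡ`. -/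
def IsFairCoin (μ : MeasureTheory.Measure (ℕ → Bool)) : Prop :=
  ∀ σ : List Bool, μ (Cyl σ) = (2 ^ σ.length : ENNReal)⁻¹

/-- A Schnorr test with respect to the measure `μ`: uniformly c.e. open sets with
uniformly computable measures bounded by `2^{-n}`. -/
def SchnorrTest (μ : MeasureTheory.Measure (ℕ → Bool)) (U : ℕ → Set (ℕ → Bool)) : Prop :=
  (∃ P : ℕ → Set (List Bool), UniformlyCE P ∧ ∀ n, U n = OpenFrom (P n)) ∧
  (∃ q : ℕ → ℕ → ℚ, Computable₂ q ∧
    ∀ n k, |(q n k : ℝ) - (μ (U n)).toReal| ≤ (2 : ℝ)⁻¹ ^ k) ∧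
  ∀ n, μ (U n) ≤ (2 ^ n : ENNReal)⁻¹

/-- A Schnorr random real (with respect to the fair-coin measure `μ`). -/
def SchnorrRandom (μ : MeasureTheory.Measure (ℕ → Bool)) (G : ℕ → Bool) : Prop :=
  ∀ U : ℕ → Set (ℕ → Bool), SchnorrTest μ U → G ∉ ⋂ n, U n

open Classical in
/-- The characteristic sequence of a set of naturals, as a point of 2^ω. -/
noncomputable def chiB (R : Set ℕ) : ℕ → Bool := fun n => decide (n ∈ R)

open Encodable Denumerable Nat.Partrec

/-!
Each property of the generic `R` is forced by meeting one arithmetical dense family of conditions.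
Infinitude comes from the conditions whose finite part has an element above `n`. For a computable
`D`, take the conditions `[a, A]` such that `D i ⊆ a ∪ A` implies `|D i| ≤ i` for every `i ≥ |a|`:
below any condition one is obtained by thinning `A` so that its `k`-th element exceeds every
element of `D j` for `j ≤ |a| + k`, because then a set `D i ⊆ a ∪ A` with `i ≥ |a|` can only use
the first `i - |a|` elements of `A`. Once `R ∈ [a, A]`, every `D i ⊆ R` with `i ≥ |a|` has at
most `i` elements.

The families are arithmetical since a code of `[a, A]` consists of the code of `a`, over which
one may quantify, and an index of the characteristic function of `A`, for which membership is
`Σ⁰₁`.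
-/

namespace ComputablePred

variable {α β : Type*} [Primcodable α] [Primcodable β]

protected theorem and {p q : α → Prop} (hp : ComputablePred p) (hq : ComputablePred q) :
    ComputablePred fun a => p a ∧ q a := by
  classical
  exact computable_iff.2 ⟨_, Primrec.and.to_comp.comp hp.decide hq.decide, by ext; simp⟩

protected theorem or {p q : α → Prop} (hp : ComputablePred p) (hq : ComputablePred q) :
    ComputablePred fun a => p a ∨ q a := by
  classical
  exact computable_iff.2 ⟨_, Primrec.or.to_comp.comp hp.decide hq.decide, by ext; simp⟩

protected theorem comp {p : β → Prop} {f : α → β} (hp : ComputablePred p) (hf : Computable f) :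
    ComputablePred fun a => p (f a) := by
  classical
  exact (hp.decide.comp hf).computablePred

end ComputablePred

namespace Arithmetical

theorem of_eq {S T : Set ℕ} (hS : Arithmetical S) (h : S = T) : Arithmetical T := h ▸ hS

theorem preimage {S : Set ℕ} (hS : Arithmetical S) {f : ℕ → ℕ} (hf : Computable f) :
    Arithmetical (f ⁻¹' S) := by
  induction hS generalizing f with
  | of_computable h => exact of_computable (h.comp hf)
  | compl _ ih => exact (ih hf).compl
  | proj _ ih =>
    have hg : Computable fun z : ℕ => Nat.pair (f z.unpair.1) z.unpair.2 :=
      Primrec₂.natPair.to_comp.comp (hf.comp (Computable.fst.comp Computable.unpair))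
        (Computable.snd.comp Computable.unpair)
    exact (ih hg).proj.of_eq (by ext; simp)

theorem inter_union_of_computablePred {S T : Set ℕ} (hS : Arithmetical S)
    (hT : ComputablePred (· ∈ T)) : Arithmetical (S ∩ T) ∧ Arithmetical (S ∪ T) := by
  induction hS generalizing T with
  | of_computable hS => exact ⟨of_computable (hS.and hT), of_computable (hS.or hT)⟩
  | compl _ ih =>
    obtain ⟨hi, hu⟩ := ih (T := {x | x ∉ T}) hT.not
    exact ⟨hu.compl.of_eq (by ext; simp), hi.compl.of_eq (by ext; simp [or_iff_not_imp_left])⟩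
  | proj _ ih =>
    obtain ⟨hi, hu⟩ := ih (T := {z | z.unpair.1 ∈ T})
      (hT.comp (Computable.fst.comp Computable.unpair))
    exact ⟨hi.proj.of_eq (by ext; simp [exists_and_right]),
      hu.proj.of_eq (by ext; simp [exists_or])⟩

theorem inter_union {S T : Set ℕ} (hS : Arithmetical S) (hT : Arithmetical T) :
    Arithmetical (S ∩ T) ∧ Arithmetical (S ∪ T) := by
  induction hT generalizing S with
  | of_computable hT => exact inter_union_of_computablePred hS hT
  | compl _ ih =>
    obtain ⟨hi, hu⟩ := ih hS.compl
    exact ⟨hu.compl.of_eq (by ext; simp), hi.compl.of_eq (by ext; simp [or_iff_not_imp_left])⟩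
  | proj _ ih =>
    obtain ⟨hi, hu⟩ := ih (hS.preimage (Computable.fst.comp Computable.unpair))
    exact ⟨hi.proj.of_eq (by ext; simp [exists_and_left]),
      hu.proj.of_eq (by ext; simp [exists_or])⟩

end Arithmetical

def ArithmeticalPred {α : Type*} [Primcodable α] (p : α → Prop) : Prop :=
  Arithmetical {n | ∃ a, decode n = some a ∧ p a}

section

variable {α β : Type*} [Primcodable α] [Primcodable β]

namespace ArithmeticalPred

theorem of_iff {p q : α → Prop} (hp : ArithmeticalPred p) (h : ∀ a, p a ↔ q a) :
    ArithmeticalPred q :=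
  (funext fun a => propext (h a) : p = q) ▸ hp

theorem of_computablePred {p : α → Prop} (hp : ComputablePred p) : ArithmeticalPred p := by
  classical
  refine .of_computable (ComputablePred.computable_iff.2 ⟨_, Computable.option_casesOn
    Computable.decode (Computable.const false) (hp.decide.comp Computable.snd).to₂, ?_⟩)
  ext n
  cases h : decode (α := α) n <;> simp [h]

theorem const_true : ArithmeticalPred fun _ : α => True :=
  of_computablePred <|
    ComputablePred.computable_iff.2 ⟨fun _ => true, Computable.const true, by simp⟩

theorem comp {p : β → Prop} (hp : ArithmeticalPred p) {f : α → β} (hf : Computable f) :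
    ArithmeticalPred fun a => p (f a) :=
  ((const_true (α := α)).inter_union (hp.preimage (Computable.option_casesOn Computable.decode
    (Computable.const 0) (Computable.encode.comp (hf.comp Computable.snd)).to₂))).1.of_eq <| by
      ext n; cases h : decode (α := α) n <;> simp [h]

theorem arithmetical {p : ℕ → Prop} (hp : ArithmeticalPred p) : Arithmetical {n | p n} :=
  hp.of_eq (by ext; simp)

theorem and {p q : α → Prop} (hp : ArithmeticalPred p) (hq : ArithmeticalPred q) :
    ArithmeticalPred fun a => p a ∧ q a :=
  (hp.inter_union hq).1.of_eq <| by ext n; cases h : decode (α := α) n <;> simp [h]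

theorem or {p q : α → Prop} (hp : ArithmeticalPred p) (hq : ArithmeticalPred q) :
    ArithmeticalPred fun a => p a ∨ q a :=
  (hp.inter_union hq).2.of_eq <| by ext n; cases h : decode (α := α) n <;> simp [h]

theorem not {p : α → Prop} (hp : ArithmeticalPred p) : ArithmeticalPred fun a => ¬p a :=
  ((const_true (α := α)).inter_union hp.compl).1.of_eq <| by
      ext n; cases h : decode (α := α) n <;> simp [h]

theorem imp {p q : α → Prop} (hp : ArithmeticalPred p) (hq : ArithmeticalPred q) :
    ArithmeticalPred fun a => p a → q a :=
  (hp.not.or hq).of_iff fun _ => imp_iff_not_or.symm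

end ArithmeticalPred

theorem ArithmeticalPred.exists {p : α → β → Prop}
    (hp : ArithmeticalPred fun x : α × β => p x.1 x.2) : ArithmeticalPred fun a => ∃ b, p a b :=
  hp.proj.of_eq <| by
    ext n
    simp only [Set.mem_ofPred_eq, Encodable.decode_prod_val, Nat.unpair_pair,
      Option.bind_eq_some_iff, Option.map_eq_some_iff, Prod.exists, Prod.mk.injEq]
    constructor
    · rintro ⟨m, a, b, ⟨a', ha', b', hb', rfl, rfl⟩, hab⟩
      exact ⟨a', ha', b', hab⟩
    · rintro ⟨a, ha, b, hab⟩
      exact ⟨encode b, a, b, ⟨a, ha, b, by simp⟩, hab⟩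

theorem ArithmeticalPred.forall {p : α → β → Prop}
    (hp : ArithmeticalPred fun x : α × β => p x.1 x.2) : ArithmeticalPred fun a => ∀ b, p a b :=
  (ArithmeticalPred.exists (p := fun a b => ¬p a b) hp.not).not.of_iff fun _ => not_exists_not

end

namespace Denumerable

theorem foldl_raise' (l acc : List ℕ) (n : ℕ) :
    (l.foldl (fun p m => (p.1 ++ [m + p.2], m + p.2 + 1)) (acc, n)).1 = acc ++ raise' l n := by
  induction l generalizing acc n with
  | nil => simp [raise']
  | cons m l ih => simp [raise', ih]

theorem primrec_raise' : Primrec₂ raise' := by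
  have step : Primrec₂ fun (p : List ℕ × ℕ) (m : ℕ) => (p.1 ++ [m + p.2], m + p.2 + 1) :=
    have hsum : Primrec₂ fun (p : List ℕ × ℕ) (m : ℕ) => m + p.2 :=
      Primrec.nat_add.comp Primrec.snd (Primrec.snd.comp Primrec.fst)
    (Primrec.list_concat.comp (Primrec.fst.comp Primrec.fst) hsum).pair (Primrec.succ.comp hsum)
  exact (Primrec.fst.comp (Primrec.list_foldl Primrec.fst
    (Primrec.pair (Primrec.const []) Primrec.snd)
    (step.comp (Primrec.fst.comp Primrec.snd) (Primrec.snd.comp Primrec.snd)).to₂)).of_eq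
    fun p => by simp [foldl_raise']

theorem sort_ofNat_finset (n : ℕ) :
    (ofNat (Finset ℕ) n).sort (· ≤ ·) = raise' (ofNat (List ℕ) n) 0 := by
  have h : (ofNat (Finset ℕ) n).val = ↑(raise' (ofNat (List ℕ) n) 0) := by
    show (Finset.map _ _).val = _
    have hid : ofNat ℕ = id := funext ofNat_nat
    simp [raise'Finset, Denumerable.eqv, hid]
  rw [← Finset.sort_val, h, Multiset.coe_sort]
  exact List.mergeSort_eq_self _ (raise'_sorted _ _).sortedLE.pairwise

end Denumerable

-- `Finset ℕ` is `Primcodable` through its `Denumerable` coding by gaps (`raise'`), not through the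
-- `Finset.encodable` coding `encode s = encode (s.sort (· ≤ ·))` in which conditions are coded.
theorem primrec_finset_sort : Primrec fun s : Finset ℕ => s.sort (· ≤ ·) :=
  Primrec.ofNat_iff.2 <| (primrec_raise'.comp (Primrec.ofNat _) (Primrec.const 0)).of_eq
    fun n => (sort_ofNat_finset n).symm

theorem primrecRel_mem_finset : PrimrecRel fun (x : ℕ) (s : Finset ℕ) => x ∈ s :=
  ((PrimrecRel.exists_mem_list Primrec.eq).comp (primrec_finset_sort.comp Primrec.snd)
    Primrec.fst).of_eq fun _ => by simp

theorem primrec_finset_card : Primrec (Finset.card : Finset ℕ → ℕ) :=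
  (Primrec.list_length.comp primrec_finset_sort).of_eq fun _ => Finset.length_sort _

theorem primrec_finset_sum : Primrec fun s : Finset ℕ => ∑ x ∈ s, x :=
  (Primrec.list_foldr primrec_finset_sort (Primrec.const 0)
    (Primrec.nat_add.comp (Primrec.fst.comp Primrec.snd) (Primrec.snd.comp Primrec.snd)).to₂).of_eq
    fun s => by
      rw [Finset.sum_eq_multiset_sum, ← Finset.sort_eq s (· ≤ ·), Multiset.map_coe,
        Multiset.sum_coe, List.map_id', List.sum_eq_foldr]

theorem computablePred_mem_finset {α : Type*} [Primcodable α] {x : α → ℕ} {s : α → Finset ℕ}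
    (hx : Computable x) (hs : Computable s) : ComputablePred fun a => x a ∈ s a :=
  primrecRel_mem_finset.computablePred.comp (hx.pair hs)

def codeSet (e : ℕ) : Set ℕ := {x | (ofNat Code e).eval x = Part.some 1}

def IsCharCode (e : ℕ) : Prop :=
  ∀ x, (ofNat Code e).eval x = Part.some 0 ∨ (ofNat Code e).eval x = Part.some 1

theorem arithmeticalPred_eval_eq {α : Type*} [Primcodable α] {e x : α → ℕ} (he : Computable e)
    (hx : Computable x) (k : ℕ) :
    ArithmeticalPred fun a => (ofNat Code (e a)).eval (x a) = Part.some k := by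
  refine (ArithmeticalPred.exists (p := fun a s => (ofNat Code (e a)).evaln s (x a) = some k)
    (.of_computablePred ?_)).of_iff fun a => ?_
  · exact (Primrec.eq.comp Code.primrec_evaln (Primrec.const _)).computablePred.comp
      ((Computable.snd.pair ((Computable.ofNat Code).comp (he.comp Computable.fst))).pair
        (hx.comp Computable.fst))
  · rw [Part.eq_some_iff, Code.evaln_complete]
    rfl

theorem arithmeticalPred_mem_codeSet {α : Type*} [Primcodable α] {x e : α → ℕ}
    (hx : Computable x) (he : Computable e) : ArithmeticalPred fun a => x a ∈ codeSet (e a) :=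
  arithmeticalPred_eval_eq he hx 1

theorem arithmeticalPred_isCharCode : ArithmeticalPred IsCharCode :=
  ArithmeticalPred.forall <|
    (arithmeticalPred_eval_eq Computable.fst Computable.snd 0).or
      (arithmeticalPred_eval_eq Computable.fst Computable.snd 1)

theorem computablePred_mem_codeSet {e : ℕ} (he : IsCharCode e) :
    ComputablePred (· ∈ codeSet e) := by
  classical
  refine (Partrec.of_eq_tot (f := fun x => ((ofNat Code e).eval x).map fun k => decide (k = 1))
    ?_ fun x => ?_).computablePred
  · exact (Code.eval_part.comp (Computable.const _) Computable.id).map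
      ((Primrec.eq.comp Primrec.snd (Primrec.const 1)).decide.to_comp.to₂)
  · rcases he x with h | h <;> simp [codeSet, h]

theorem condCode_iff {n : ℕ} {c : MathiasCond} :
    CondCode n c ↔ n.unpair.1 = encode c.a ∧ IsCharCode n.unpair.2 ∧ c.A = codeSet n.unpair.2 := by
  refine and_congr_right fun _ => ⟨fun h => ⟨fun x => ?_, ?_⟩, fun ⟨hchar, hA⟩ x => ?_⟩
  · rw [h x]; split_ifs <;> simp
  · ext x; simp [codeSet, h x]
  · rw [hA]
    rcases hchar x with h | h <;> simp [codeSet, h]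

theorem arithmetical_codesOf {X : Set MathiasCond} {P : Finset ℕ → Set ℕ → Prop}
    (hX : ∀ c, c ∈ X ↔ P c.a c.A)
    (hP : ArithmeticalPred fun q : ℕ × Finset ℕ => P q.2 (codeSet q.1)) :
    Arithmetical (CodesOf X) := by
  have hcodes : CodesOf X = {n | ∃ a : Finset ℕ, n.unpair.1 = encode a ∧ IsCharCode n.unpair.2 ∧
      (codeSet n.unpair.2).Infinite ∧ (∀ x ∈ a, ∀ y ∈ codeSet n.unpair.2, x < y) ∧
      P a (codeSet n.unpair.2)} := by
    ext n
    constructor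
    · rintro ⟨c, hc, hcode⟩
      obtain ⟨hfin, hchar, hA⟩ := condCode_iff.1 hcode
      exact ⟨c.a, hfin, hchar, hA ▸ c.infinite, hA ▸ c.lt, hA ▸ (hX c).1 hc⟩
    · rintro ⟨a, hfin, hchar, hinf, hlt, hPa⟩
      exact ⟨⟨a, _, hinf, computablePred_mem_codeSet hchar, hlt⟩, (hX _).2 hPa,
        condCode_iff.2 ⟨hfin, hchar, rfl⟩⟩
  have he : Computable fun q : ℕ × Finset ℕ => q.1.unpair.2 :=
    Computable.snd.comp (Computable.unpair.comp Computable.fst)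
  have hfin : ComputablePred fun q : ℕ × Finset ℕ => q.1.unpair.1 = encode q.2 :=
    (Primrec.eq.comp (Primrec.fst.comp (Primrec.unpair.comp Primrec.fst))
      (Primrec.encode.comp (primrec_finset_sort.comp Primrec.snd))).computablePred
  have hmem : ArithmeticalPred fun r : ((ℕ × Finset ℕ) × ℕ) × ℕ => r.2 ∈ codeSet r.1.1.1.unpair.2 :=
    arithmeticalPred_mem_codeSet Computable.snd (he.comp (Computable.fst.comp Computable.fst))
  have hlt₂ : ArithmeticalPred fun r : ((ℕ × Finset ℕ) × ℕ) × ℕ => r.1.2 < r.2 :=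
    .of_computablePred <|
      (Primrec.nat_lt.comp (Primrec.snd.comp Primrec.fst) Primrec.snd).computablePred
  have hinf : ArithmeticalPred fun q : ℕ × Finset ℕ => ∀ u, ∃ y, y ∈ codeSet q.1.unpair.2 ∧ u < y :=
    .forall <| .exists <| hmem.and hlt₂
  have hlt : ArithmeticalPred fun q : ℕ × Finset ℕ =>
      ∀ x, x ∈ q.2 → ∀ y, y ∈ codeSet q.1.unpair.2 → x < y :=
    .forall <| .imp (.of_computablePred (computablePred_mem_finset Computable.snd
      (Computable.snd.comp Computable.fst))) <| .forall <| .imp hmem hlt₂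
  rw [hcodes]
  refine (ArithmeticalPred.exists <| (ArithmeticalPred.of_computablePred hfin).and <|
    (arithmeticalPred_isCharCode.comp he).and <| (hinf.of_iff fun q => ?_).and <| hlt.and <|
    hP.comp (he.pair Computable.snd)).arithmetical
  simp [Set.infinite_iff_exists_gt]

theorem exists_computable_strictMono_mem_gt {A : Set ℕ} (hA : A.Infinite)
    (hAc : ComputablePred (· ∈ A)) {f : ℕ → ℕ} (hf : Computable f) :
    ∃ g : ℕ → ℕ, Computable g ∧ StrictMono g ∧ (∀ k, g k ∈ A) ∧ ∀ k, f k < g k := by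
  classical
  have hex : ∀ t, ∃ y, y ∈ A ∧ t < y := hA.exists_gt
  have hnext : Computable fun t => Nat.find (hex t) :=
    Computable.find ((hAc.comp Computable.snd).and Primrec.nat_lt.computablePred) hex
  have next_spec : ∀ t, Nat.find (hex t) ∈ A ∧ t < Nat.find (hex t) :=
    fun t => Nat.find_spec (hex t)
  let g : ℕ → ℕ := fun k =>
    Nat.rec (Nat.find (hex (f 0))) (fun k gk => Nat.find (hex (max gk (f (k + 1))))) k
  refine ⟨g, ?_, strictMono_nat_of_lt_succ fun k => ?_, fun k => ?_, fun k => ?_⟩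
  · exact Computable.nat_rec Computable.id (hnext.comp (hf.comp (Computable.const 0)))
      (hnext.comp (Primrec.nat_max.to_comp.comp (Computable.snd.comp Computable.snd)
        (hf.comp (Computable.succ.comp (Computable.fst.comp Computable.snd))))).to₂
  · exact (le_max_left _ _).trans_lt (next_spec _).2
  · cases k <;> exact (next_spec _).1
  · cases k with
    | zero => exact (next_spec _).2
    | succ k => exact (le_max_right _ _).trans_lt (next_spec _).2

theorem computablePred_mem_range_of_strictMono {g : ℕ → ℕ} (hg : Computable g)
    (hmono : StrictMono g) : ComputablePred (· ∈ Set.range g) := by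
  classical
  have hex : ∀ y, ∃ k, y ≤ g k := fun y => ⟨y, hmono.id_le y⟩
  have hfind : Computable fun y => Nat.find (hex y) :=
    Computable.find (P := fun y k => y ≤ g k) (Primrec.nat_le.computablePred.comp
      (Computable.fst.pair (hg.comp Computable.snd))) hex
  refine (Primrec.eq.computablePred.comp ((hg.comp hfind).pair Computable.id)).of_eq fun y => ?_
  refine ⟨fun h => ⟨_, h⟩, ?_⟩
  rintro ⟨k, rfl⟩
  have hk : Nat.find (hex (g k)) = k :=
    le_antisymm (Nat.find_min' _ le_rfl) (hmono.le_iff_le.1 (Nat.find_spec (hex (g k))))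
  simp [hk]

namespace MathiasCond

def exceeding (n : ℕ) : Set MathiasCond := {c | ∃ x ∈ c.a, n < x}

def boundingCard (D : ℕ → Finset ℕ) : Set MathiasCond :=
  {c | ∀ i, c.a.card ≤ i → ↑(D i) ⊆ ↑c.a ∪ c.A → (D i).card ≤ i}

theorem arithmetical_codesOf_exceeding (n : ℕ) : Arithmetical (CodesOf (exceeding n)) :=
  arithmetical_codesOf (P := fun a _ => ∃ x, x ∈ a ∧ n < x) (fun _ => Iff.rfl) <|
    .exists <| .of_computablePred <| (computablePred_mem_finset Computable.snd
      (Computable.snd.comp Computable.fst)).and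
        (Primrec.nat_lt.computablePred.comp ((Computable.const n).pair Computable.snd))

theorem mathiasDense_exceeding (n : ℕ) : MathiasDense (exceeding n) := by
  intro c
  obtain ⟨x, hxA, hnx⟩ := c.infinite.exists_gt n
  refine ⟨⟨insert x c.a, {y | y ∈ c.A ∧ x < y}, ?_, ?_, ?_⟩, ⟨x, Finset.mem_insert_self _ _, hnx⟩,
    Finset.subset_insert _ _, ?_, fun y hy => hy.1⟩
  · exact (c.infinite.sdiff (Set.finite_le_nat x)).mono fun y hy => ⟨hy.1, by simpa using hy.2⟩
  · exact c.comp.and (Primrec.nat_lt.computablePred.comp ((Computable.const x).pair Computable.id))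
  · intro z hz y hy
    rcases Finset.mem_insert.1 hz with rfl | hz
    exacts [hy.2, c.lt z hz y hy.1]
  · intro y ⟨hy, hya⟩
    rcases Finset.mem_insert.1 hy with rfl | hy
    exacts [hxA, absurd hy hya]

theorem arithmetical_codesOf_boundingCard {D : ℕ → Finset ℕ} (hD : Computable D) :
    Arithmetical (CodesOf (boundingCard D)) := by
  refine arithmetical_codesOf (P := fun a A => ∀ i, a.card ≤ i →
    (∀ x, x ∈ D i → x ∈ a ∨ x ∈ A) → (D i).card ≤ i)
    (fun c => by simp [boundingCard, Set.subset_def])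
    (.forall <| .imp ?_ <| .imp (.forall <| .imp ?_ <| .or ?_ ?_) ?_)
  · exact .of_computablePred (Primrec.nat_le.comp (primrec_finset_card.comp
      (Primrec.snd.comp Primrec.fst)) Primrec.snd).computablePred
  · exact .of_computablePred (computablePred_mem_finset Computable.snd
      (hD.comp (Computable.snd.comp Computable.fst)))
  · exact .of_computablePred (computablePred_mem_finset Computable.snd
      (Computable.snd.comp (Computable.fst.comp Computable.fst)))
  · exact arithmeticalPred_mem_codeSet Computable.snd
      (Computable.fst.comp (Computable.fst.comp Computable.fst))
  · exact .of_computablePred (Primrec.nat_le.computablePred.comp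
      ((primrec_finset_card.to_comp.comp (hD.comp Computable.snd)).pair Computable.snd))

theorem mathiasDense_boundingCard {D : ℕ → Finset ℕ} (hD : Computable D) :
    MathiasDense (boundingCard D) := by
  intro c
  obtain ⟨g, hg, hmono, hgA, hgt⟩ := exists_computable_strictMono_mem_gt c.infinite c.comp
    (primrec_finset_sum.to_comp.comp hD)
  set h : ℕ → ℕ := fun k => g (c.a.card + k)
  have hmono' : StrictMono h := hmono.comp (strictMono_id.const_add _)
  refine ⟨⟨c.a, Set.range h, Set.infinite_range_of_injective hmono'.injective,
    computablePred_mem_range_of_strictMono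
      (hg.comp (Primrec.nat_add.comp (Primrec.const _) Primrec.id).to_comp) hmono',
    fun x hx _ ⟨k, hk⟩ => hk ▸ c.lt x hx _ (hgA _)⟩, ?_, subset_rfl, by simp, ?_⟩
  · intro i (hi : c.a.card ≤ i) hsub
    have hsub' : D i ⊆ c.a ∪ (Finset.range (i - c.a.card)).image h := by
      intro x hx
      rcases hsub hx with hxa | ⟨k, rfl⟩
      · exact Finset.mem_union_left _ hxa
      refine Finset.mem_union_right _ (Finset.mem_image_of_mem h (Finset.mem_range.2 ?_))
      by_contra hk
      have hlt : ∑ x ∈ D i, x < h k := (hgt i).trans_le (hmono.monotone (by omega))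
      exact hlt.not_ge (Finset.single_le_sum (f := fun x => x) (fun _ _ => Nat.zero_le _) hx)
    calc (D i).card ≤ (c.a ∪ (Finset.range (i - c.a.card)).image h).card :=
          Finset.card_le_card hsub'
      _ ≤ c.a.card + (i - c.a.card) :=
          (Finset.card_union_le _ _).trans (by grw [Finset.card_image_le, Finset.card_range])
      _ = i := by omega
  · rintro _ ⟨k, rfl⟩
    exact hgA _

end MathiasCond

namespace MathiasGeneric

theorem infinite {R : Set ℕ} (hR : MathiasGeneric R) : R.Infinite :=
  Set.infinite_of_forall_exists_gt fun n => by
    obtain ⟨c, ⟨x, hxa, hnx⟩, hRc⟩ := hR _ (MathiasCond.arithmetical_codesOf_exceeding n)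
      (MathiasCond.mathiasDense_exceeding n)
    exact ⟨x, hRc.1 hxa, hnx⟩

theorem eventually_card_le {R : Set ℕ} (hR : MathiasGeneric R) {D : ℕ → Finset ℕ}
    (hD : Computable D) : ∀ᶠ i in Filter.atTop, ↑(D i) ⊆ R → (D i).card ≤ i := by
  obtain ⟨c, hc, hRc⟩ := hR _ (MathiasCond.arithmetical_codesOf_boundingCard hD)
    (MathiasCond.mathiasDense_boundingCard hD)
  exact Filter.eventually_atTop.2 ⟨c.a.card, fun i hi hDR => hc i hi (hDR.trans hRc.2)⟩

end MathiasGeneric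

/-- Every Mathias generic is canonically immune, with modulus of immunity the identity. -/
theorem mathias_generic_canonically_immune :
    ∀ R : Set ℕ, MathiasGeneric R → CanonImmuneMod R id :=
  fun _ hR => ⟨hR.infinite, fun _ hD => hR.eventually_card_le hD.1⟩
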